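/- arXiv:1209.5367 — 2 statements merged into one kernel-verified Lean document; each statement's English description precedes it below -/
import Mathlib

section
/- Let M : H → H be a bounded invertible operator (a continuous linear equivalence) that is translation-invariant. Then there exists λ ∈ ℂ with λ ≠ 0 such that M e_{c₀} = λ • e_{c₀}. If moreover M is a linear isometry, then |λ| = 1. -/
open scoped ENNReal

noncomputable section

namespace QCA

abbrev Lat (n : ℕ) : Type := Fin n → ℤ

def Conf (n : ℕ) (A : Type*) (q0 : A) : Type _ :=
  {c : Lat n → A // {x : Lat n | c x ≠ q0}.Finite}

def c0 (n : ℕ) (A : Type*) (q0 : A) : Conf n A q0 :=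
  ⟨fun _ => q0, by simp⟩

abbrev H (n : ℕ) (A : Type*) (q0 : A) : Type _ := lp (fun _ : Conf n A q0 => ℂ) 2

def eVec {n : ℕ} {A : Type*} {q0 : A} (c : Conf n A q0) : H n A q0 :=
  letI : DecidableEq (Conf n A q0) := Classical.decEq _
  lp.single 2 c 1

/-- Translation of a configuration by `z`: the configuration `x ↦ c (x + z)`. -/
def shiftConf {n : ℕ} {A : Type*} {q0 : A} (z : Lat n) (c : Conf n A q0) : Conf n A q0 :=
  ⟨fun x => c.1 (x + z), by
    have h : {x : Lat n | c.1 (x + z) ≠ q0} ⊆ (fun x : Lat n => x + z) ⁻¹' {x | c.1 x ≠ q0} :=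
      fun x hx => hx
    exact (c.2.preimage ((add_left_injective z).injOn)).subset h⟩

/-- Translation by `z` as a permutation of the set of finite configurations. -/
def shiftEquiv {n : ℕ} {A : Type*} (q0 : A) (z : Lat n) : Conf n A q0 ≃ Conf n A q0 where
  toFun := shiftConf z
  invFun := shiftConf (-z)
  left_inv c := Subtype.ext (funext fun x => by
    show c.1 (x + -z + z) = c.1 x
    rw [neg_add_cancel_right])
  right_inv c := Subtype.ext (funext fun x => by
    show c.1 (x + z + -z) = c.1 x
    rw [add_neg_cancel_right])

theorem memℓp_comp_equiv {ι κ : Type*} (e : κ ≃ ι) {f : ι → ℂ} (hf : Memℓp f 2) :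
    Memℓp (fun k => f (e k)) 2 := by
  have hp : 0 < (2 : ℝ≥0∞).toReal := by norm_num
  exact memℓp_gen ((e.summable_iff
    (f := fun i => ‖f i‖ ^ (2 : ℝ≥0∞).toReal)).mpr (hf.summable hp))

/-- The unitary operator on `ℓ²` induced by a permutation of the index set. -/
def lpCongr {ι κ : Type*} (e : ι ≃ κ) :
    lp (fun _ : ι => ℂ) 2 ≃ₗᵢ[ℂ] lp (fun _ : κ => ℂ) 2 where
  toLinearEquiv :=
    { toFun := fun f => ⟨fun k => f (e.symm k), memℓp_comp_equiv e.symm (lp.memℓp f)⟩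
      map_add' := fun f g => lp.ext (funext fun k => by
        simp [lp.coeFn_add] <;> rfl)
      map_smul' := fun r f => lp.ext (funext fun k => by
        simp [lp.coeFn_smul])
      invFun := fun g => ⟨fun i => g (e i), memℓp_comp_equiv e (lp.memℓp g)⟩
      left_inv := fun f => lp.ext (funext fun i => by simp)
      right_inv := fun g => lp.ext (funext fun k => by simp) }
  norm_map' := fun f => by
    have hp : 0 < (2 : ℝ≥0∞).toReal := by norm_num
    rw [lp.norm_eq_tsum_rpow hp, lp.norm_eq_tsum_rpow hp]
    congr 1
    exact e.symm.tsum_eq (fun i => ‖f i‖ ^ (2 : ℝ≥0∞).toReal)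

/-- The translation operator `τ_z` on the Hilbert space of finite configurations. -/
def tau {n : ℕ} {A : Type*} (q0 : A) (z : Lat n) : H n A q0 ≃ₗᵢ[ℂ] H n A q0 :=
  lpCongr (shiftEquiv q0 z)

/-- A bounded operator on `H` is translation invariant if `τ_z ∘ M ∘ τ_z⁻¹ = M` for all `z`. -/
def TranslationInvariant {n : ℕ} {A : Type*} (q0 : A) (M : H n A q0 →L[ℂ] H n A q0) : Prop :=
  ∀ (z : Lat n) (v : H n A q0), tau q0 z (M ((tau q0 z).symm v)) = M v


section Local

variable {n : ℕ} {A : Type*} [Fintype A]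

/-- The configuration agreeing with `f` on `D` and with `c` outside `D`. -/
def override {q0 : A} (D : Finset (Lat n)) (f : {x // x ∈ D} → A) (c : Conf n A q0) :
    Conf n A q0 :=
  ⟨fun x => if h : x ∈ D then f ⟨x, h⟩ else c.1 x, by
    refine Set.Finite.subset (Set.Finite.union D.finite_toSet c.2) ?_
    intro x hx
    rcases Decidable.em (x ∈ D) with h | h
    · exact Set.mem_union_left _ h
    · exact Set.mem_union_right _ (by simpa [h] using hx)⟩

/-- A bounded operator on the Hilbert space of finite configurations is local upon the finite
set `D` of cells if its action on basis vectors only modifies, and only reads, the cells in `D`. -/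
def IsLocalUpon (q0 : A) (D : Finset (Lat n)) (T : H n A q0 →L[ℂ] H n A q0) : Prop :=
  ∃ a : ({x // x ∈ D} → A) → ({x // x ∈ D} → A) → ℂ, ∀ c : Conf n A q0,
    T (eVec c) = ∑ f : {x // x ∈ D} → A,
      a f (fun x => c.1 x.1) • eVec (override D f c)

/-- The neighborhood of the cell `x`: `𝒩_x = {x + k : k ∈ 𝒩}`. -/
def nbhd {n : ℕ} (𝒩 : Finset (Lat n)) (x : Lat n) : Finset (Lat n) :=
  𝒩.image (fun k => x + k)

/-- The reflected neighborhood of the cell `x`: `𝒱_x = {x - k : k ∈ 𝒩}`. -/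
def rnbhd {n : ℕ} (𝒩 : Finset (Lat n)) (x : Lat n) : Finset (Lat n) :=
  𝒩.image (fun k => x - k)

/-- A unitary `M` is causal relative to the neighborhood `𝒩` if conjugation `M† A M` maps
operators local upon a cell `x` to operators local upon `𝒩_x`. -/
def Causal (q0 : A) (𝒩 : Finset (Lat n)) (M : H n A q0 →L[ℂ] H n A q0) : Prop :=
  ∀ (x : Lat n) (B : H n A q0 →L[ℂ] H n A q0), IsLocalUpon q0 {x} B →
    IsLocalUpon q0 (nbhd 𝒩 x) (ContinuousLinearMap.adjoint M ∘L B ∘L M)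

end Local

/-- The standard basis vector of the one-cell Hilbert space `ℂ^A`. -/
def wVec (A : Type*) [Fintype A] (a : A) : EuclideanSpace ℂ A :=
  letI : DecidableEq A := Classical.decEq A
  EuclideanSpace.single a 1

/-- The configuration obtained from `c` by replacing the value at the cell `x` by `r`. -/
def updateConf {n : ℕ} {A : Type*} {q0 : A} (x : Lat n) (r : A) (c : Conf n A q0) :
    Conf n A q0 :=
  ⟨Function.update c.1 x r, by
    refine Set.Finite.subset (c.2.union (Set.finite_singleton x)) ?_
    intro y hy
    rcases eq_or_ne y x with rfl | hxy
    · exact Set.mem_union_right _ rfl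
    · exact Set.mem_union_left _ (by
        simpa [Function.update_of_ne hxy] using hy)⟩

/-- The subalgebra `𝔇_{y,x}` of `End(ℂ^A)`: endomorphisms `a` of the one-cell Hilbert space
such that the operator `ι_x(a)` local upon `{x}` implementing `a` at the cell `x` is of the form
`R† B R` for some operator `B` local upon `{x - y}`. -/
def Dset {n : ℕ} {A : Type*} [Fintype A] (q0 : A)
    (R : H n A q0 →L[ℂ] H n A q0) (y x : Lat n) :
    Set (Module.End ℂ (EuclideanSpace ℂ A)) :=
  {a | ∃ B : H n A q0 →L[ℂ] H n A q0, IsLocalUpon q0 {x - y} B ∧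
    ∀ c : Conf n A q0,
      (ContinuousLinearMap.adjoint R ∘L B ∘L R) (eVec c) =
        ∑ q : A, (inner ℂ (wVec A q) (a (wVec A (c.1 x))) : ℂ) • eVec (updateConf x q c)}



section Component

variable {n : ℕ} {𝒩 : Finset (Lat n)} {K : {z // z ∈ 𝒩} → Type*}

/-- The propagation map on configurations in component form:
`(s c) x z = (c (x + z)) z`. -/
def sConf (qz : ∀ z : {z // z ∈ 𝒩}, K z) (c : Conf n (∀ z : {z // z ∈ 𝒩}, K z) qz) :
    Conf n (∀ z : {z // z ∈ 𝒩}, K z) qz :=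
  ⟨fun x z => c.1 (x + z.1) z, by
    refine Set.Finite.subset
      (Set.finite_iUnion (fun z : {z // z ∈ 𝒩} =>
        (c.2.preimage ((add_left_injective z.1).injOn)))) ?_
    intro x hx
    obtain ⟨z, hz⟩ := Function.ne_iff.mp hx
    exact Set.mem_iUnion.2 ⟨z, fun h => hz (congrFun h z)⟩⟩

end Component

/-- The support of a finite configuration, as a `Finset`. -/
def suppF {n : ℕ} {A : Type*} {q0 : A} (c : Conf n A q0) : Finset (Lat n) :=
  c.2.toFinset

/-- The property characterizing the local isomorphism `S̃ : H → Ĥ` induced by a one-cell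
unitary `S : W → Ŵ`. -/
def StildeProp {n : ℕ} {A B : Type*} [Fintype A] [Fintype B] (q0 : A) (qh : B)
    (Slin : EuclideanSpace ℂ A ≃ₗᵢ[ℂ] EuclideanSpace ℂ B)
    (St : H n A q0 ≃ₗᵢ[ℂ] H n B qh) : Prop :=
  ∀ c : Conf n A q0,
    St (eVec c) = ∑ g : {x // x ∈ suppF c} → B,
      (∏ x : {x // x ∈ suppF c}, (inner ℂ (wVec B (g x)) (Slin (wVec A (c.1 x.1))) : ℂ)) •
        eVec (override (suppF c) g (c0 n B qh))

/-- An endomorphism of the one-cell Hilbert space `ℂ^P`, `P = Π_{z ∈ 𝒩} K z`, acting only on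
the `y`-th coordinate. -/
def ActsOnCoord {n : ℕ} {𝒩 : Finset (Lat n)} {K : {z // z ∈ 𝒩} → Type*}
    [∀ z, Fintype (K z)] (y : {z // z ∈ 𝒩})
    (Aop : Module.End ℂ (EuclideanSpace ℂ (∀ z : {z // z ∈ 𝒩}, K z))) : Prop :=
  ∃ f : K y → K y → ℂ, ∀ p p' : ∀ z : {z // z ∈ 𝒩}, K z,
    ((∀ z : {z // z ∈ 𝒩}, z ≠ y → p z = p' z) →
      (inner ℂ (wVec _ p) (Aop (wVec _ p')) : ℂ) = f (p y) (p' y)) ∧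
    (¬ (∀ z : {z // z ∈ 𝒩}, z ≠ y → p z = p' z) →
      (inner ℂ (wVec _ p) (Aop (wVec _ p')) : ℂ) = 0)

/-- A factorization of the module `W` as a tensor product `⨂_{k} V k` carrying the sets of
endomorphisms `Dsets k` onto the endomorphisms acting on the `k`-th tensor factor alone. -/
structure PiTensorFactorization (ι : Type) [Fintype ι] [DecidableEq ι]
    (W : Type*) [AddCommGroup W] [Module ℂ W]
    (Dsets : ι → Set (Module.End ℂ W)) : Type _ where
  /-- The tensor factors. -/
  V : ι → Type
  [grp : ∀ k, AddCommGroup (V k)]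
  [mod : ∀ k, Module ℂ (V k)]
  fin : ∀ k, FiniteDimensional ℂ (V k)
  /-- The linear isomorphism with the tensor product. -/
  S : W ≃ₗ[ℂ] PiTensorProduct ℂ V
  cond : ∀ y : ι,
    (fun a : Module.End ℂ W => S.conj a) '' (Dsets y) =
      Set.range (fun f : Module.End ℂ (V y) =>
        (PiTensorProduct.map
          (Function.update (fun k => (LinearMap.id : V k →ₗ[ℂ] V k)) y f) :
            Module.End ℂ (PiTensorProduct ℂ V)))

/-- The continuous linear map underlying a linear isometry equivalence. -/
def isomCLM {E F : Type*} [NormedAddCommGroup E] [NormedAddCommGroup F]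
    [NormedSpace ℂ E] [NormedSpace ℂ F] (e : E ≃ₗᵢ[ℂ] F) : E →L[ℂ] F :=
  e.toLinearIsometry.toContinuousLinearMap

/-!
`τ_z` fixes `e_{c₀}`, so translation invariance makes `w = M e_{c₀}` constant along translation
orbits of configurations. A finite configuration `c ≠ c₀` has no nonzero period, so its orbit is as
large as `ℤ^n`, which is infinite for `n ≥ 1`; a square-summable family takes a nonzero value only
finitely often, hence `w` vanishes off `c₀`. The eigenvalue is nonzero because `M` is injective, and
of modulus one for an isometry because `‖e_{c₀}‖ = 1`.
-/

theorem _root_.Memℓp.finite_setOf_eq {ι E : Type*} [NormedAddCommGroup E] {p : ℝ≥0∞}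
    {f : ι → E} (hf : Memℓp f p) (hp : 0 < p.toReal) {a : E} (ha : a ≠ 0) :
    {i | f i = a}.Finite := by
  have hsmall : ∀ᶠ i in Filter.cofinite, ‖f i‖ ^ p.toReal < ‖a‖ ^ p.toReal :=
    (hf.summable hp).tendsto_cofinite_zero.eventually_lt_const (by positivity)
  exact hsmall.subset fun i (hi : f i = a) => by simp [hi]

theorem lpCongr_single {ι κ : Type*} [DecidableEq ι] [DecidableEq κ] (e : ι ≃ κ) (i : ι)
    (a : ℂ) : lpCongr e (lp.single 2 i a) = lp.single 2 (e i) a := by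
  ext k
  simp [lpCongr, lp.single_apply, Pi.single_apply, Equiv.symm_apply_eq]

section Configurations

variable {n : ℕ} {A : Type*} {q0 : A}

theorem norm_eVec (c : Conf n A q0) : ‖eVec c‖ = 1 := by
  classical
  exact (lp.norm_single (E := fun _ : Conf n A q0 => ℂ) (by norm_num) c 1).trans norm_one

theorem eq_smul_eVec_of_apply_eq_zero {v : H n A q0} {c : Conf n A q0}
    (hv : ∀ d, d ≠ c → v d = 0) : v = v c • eVec c := by
  classical
  ext d
  by_cases hd : d = c
  · subst hd
    simp [eVec]
  · simp [eVec, hd, hv d hd]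

theorem tau_eVec (z : Lat n) (c : Conf n A q0) : tau q0 z (eVec c) = eVec (shiftConf z c) := by
  classical
  exact lpCongr_single _ _ _

theorem tau_eVec_c0 (z : Lat n) : tau q0 z (eVec (c0 n A q0)) = eVec (c0 n A q0) :=
  tau_eVec z _

theorem apply_shiftConf_of_forall_tau_eq {v : H n A q0} (hv : ∀ z, tau q0 z v = v) (z : Lat n)
    (c : Conf n A q0) : v (shiftConf z c) = v c := by
  have h : v (shiftConf (- -z) c) = v c := congrArg (fun u : H n A q0 => u c) (hv (-z))
  rwa [neg_neg] at h

theorem eq_c0_of_periodic {c : Conf n A q0} {p : Lat n} (hp : p ≠ 0)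
    (hc : Function.Periodic c.1 p) : c = c0 n A q0 := by
  by_contra hne
  obtain ⟨x, hx⟩ : ∃ x, c.1 x ≠ q0 := by
    by_contra! h
    exact hne (Subtype.ext (funext h))
  have hinj : Function.Injective fun m : ℤ => x + m • p :=
    (add_right_injective x).comp (smul_left_injective ℤ hp)
  refine Set.infinite_of_injective_forall_mem hinj (fun m => ?_) c.2
  change c.1 (x + m • p) ≠ q0
  rwa [hc.zsmul m x]

theorem shiftConf_injective {c : Conf n A q0} (hc : c ≠ c0 n A q0) :
    Function.Injective fun z : Lat n => shiftConf z c := by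
  intro a b hab
  by_contra hne
  refine hc (eq_c0_of_periodic (sub_ne_zero.mpr hne) fun x => ?_)
  have := congrFun (congrArg Subtype.val hab) (x - b)
  simpa [shiftConf, sub_add_eq_add_sub, add_sub_assoc] using this

theorem apply_eq_zero_of_forall_tau_eq [NeZero n] {v : H n A q0} (hv : ∀ z, tau q0 z v = v)
    {c : Conf n A q0} (hc : c ≠ c0 n A q0) : v c = 0 := by
  by_contra hvc
  have horbit : {d | v d = v c}.Infinite :=
    Set.infinite_of_injective_forall_mem (shiftConf_injective hc)
      fun z => apply_shiftConf_of_forall_tau_eq hv z c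
  exact horbit ((lp.memℓp v).finite_setOf_eq (by norm_num) hvc)

end Configurations

theorem invertible_translation_invariant_quiescent_eigenvector_general
    (n : ℕ) (hn : 1 ≤ n) (Q : Type) (q₀ : Q)
    (M : H n Q q₀ ≃L[ℂ] H n Q q₀)
    (hM : ∀ (z : Lat n) (v : H n Q q₀), tau q₀ z (M ((tau q₀ z).symm v)) = M v) :
    ∃ lam : ℂ, lam ≠ 0 ∧ M (eVec (c0 n Q q₀)) = lam • eVec (c0 n Q q₀) ∧
      ((∀ v : H n Q q₀, ‖M v‖ = ‖v‖) → ‖lam‖ = 1) := by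
  have : NeZero n := ⟨by omega⟩
  set e₀ := eVec (c0 n Q q₀)
  have hτ : ∀ z, tau q₀ z (M e₀) = M e₀ := fun z => by
    have hfix : (tau q₀ z).symm e₀ = e₀ := (tau q₀ z).symm_apply_eq.mpr (tau_eVec_c0 z).symm
    simpa only [hfix] using hM z e₀
  obtain ⟨lam, heig⟩ : ∃ lam : ℂ, M e₀ = lam • e₀ :=
    ⟨_, eq_smul_eVec_of_apply_eq_zero fun c hc => apply_eq_zero_of_forall_tau_eq hτ hc⟩
  have hnorm : ‖e₀‖ = 1 := norm_eVec _
  refine ⟨lam, fun h0 => ?_, heig, fun hiso => ?_⟩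
  · have : e₀ = 0 := M.injective (by rw [heig, h0, zero_smul, map_zero])
    simp [this] at hnorm
  · simpa [heig, norm_smul, hnorm] using hiso e₀

/-- A bounded invertible translation-invariant operator has the quiescent basis
vector as an eigenvector, with nonzero eigenvalue; if the operator is moreover an isometry the
eigenvalue has modulus one. -/
theorem invertible_translation_invariant_quiescent_eigenvector
    (n : ℕ) (hn : 1 ≤ n) (Q : Type) [Fintype Q] (q₀ : Q)
    (M : H n Q q₀ ≃L[ℂ] H n Q q₀)
    (hM : ∀ (z : Lat n) (v : H n Q q₀), tau q₀ z (M ((tau q₀ z).symm v)) = M v) :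
    ∃ lam : ℂ, lam ≠ 0 ∧ M (eVec (c0 n Q q₀)) = lam • eVec (c0 n Q q₀) ∧
      ((∀ v : H n Q q₀, ‖M v‖ = ‖v‖) → ‖lam‖ = 1) :=
  invertible_translation_invariant_quiescent_eigenvector_general n hn Q q₀ M hM

end QCA
end
end

section
/- Let M be a unitary operator on H that is causal relative to a neighborhood 𝒩. Then for every x ∈ ℤ^n, every bounded operator on H that is local upon {x} belongs to the subalgebra of bounded operators on H generated by the union over k ∈ 𝒩 of the sets {M† B M : B a bounded operator on H local upon {x − k}}. -/
open scoped ENNReal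

noncomputable section

namespace QCA

/-!
Write `A' = M A M†`, so that `A = M† A' M`. For a one-cell matrix unit `E` at a cell `y`,
causality makes `M† E M` local upon `𝒩_y`, hence it commutes with `A` as soon as `x ∉ 𝒩_y`,
i.e. `y ∉ 𝒱_x`; conjugating back, `A'` commutes with every matrix unit at a cell outside `𝒱_x`.
Commuting with all of these forces `A'` to be local upon `𝒱_x`, and an operator local upon a finite
set of cells is a linear combination of products of one-cell matrix units at those cells. Since
conjugation by the unitary `M` is an algebra automorphism, `A = M† A' M` lies in the algebra
generated by the `M† E M` with `E` a matrix unit at some cell `x - k`.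
-/

section Configurations

variable {n : ℕ} {Q : Type*} {q₀ : Q}

abbrev restr (D : Finset (Lat n)) (c : Conf n Q q₀) : {x // x ∈ D} → Q :=
  fun x => c.1 x.1

@[ext]
theorem Conf.ext {c c' : Conf n Q q₀} (h : ∀ x, c.1 x = c'.1 x) : c = c' :=
  Subtype.ext (funext h)

theorem override_apply_of_mem {D : Finset (Lat n)} (f : {x // x ∈ D} → Q) (c : Conf n Q q₀)
    {x : Lat n} (h : x ∈ D) : (override D f c).1 x = f ⟨x, h⟩ :=
  dif_pos h

theorem override_apply_of_notMem {D : Finset (Lat n)} (f : {x // x ∈ D} → Q) (c : Conf n Q q₀)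
    {x : Lat n} (h : x ∉ D) : (override D f c).1 x = c.1 x :=
  dif_neg h

@[simp]
theorem restr_override (D : Finset (Lat n)) (f : {x // x ∈ D} → Q) (c : Conf n Q q₀) :
    restr D (override D f c) = f :=
  funext fun x => override_apply_of_mem f c x.2

theorem restr_override_of_disjoint {D D' : Finset (Lat n)} (h : Disjoint D D')
    (f : {x // x ∈ D'} → Q) (c : Conf n Q q₀) :
    restr D (override D' f c) = restr D c :=
  funext fun x => override_apply_of_notMem f c (Finset.disjoint_left.mp h x.2)

@[simp]
theorem override_override (D : Finset (Lat n)) (f g : {x // x ∈ D} → Q) (c : Conf n Q q₀) :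
    override D f (override D g c) = override D f c := by
  ext x
  by_cases h : x ∈ D
  · rw [override_apply_of_mem f _ h, override_apply_of_mem f _ h]
  · rw [override_apply_of_notMem f _ h, override_apply_of_notMem f _ h,
      override_apply_of_notMem g _ h]

@[simp]
theorem override_restr (D : Finset (Lat n)) (c : Conf n Q q₀) : override D (restr D c) c = c := by
  ext x
  by_cases h : x ∈ D
  · rw [override_apply_of_mem _ _ h]
  · rw [override_apply_of_notMem _ _ h]

theorem override_comm {D D' : Finset (Lat n)} (h : Disjoint D D')
    (f : {x // x ∈ D} → Q) (g : {x // x ∈ D'} → Q) (c : Conf n Q q₀) :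
    override D f (override D' g c) = override D' g (override D f c) := by
  ext x
  by_cases hx : x ∈ D
  · have hx' : x ∉ D' := Finset.disjoint_left.mp h hx
    rw [override_apply_of_mem f _ hx, override_apply_of_notMem g _ hx',
      override_apply_of_mem f _ hx]
  · by_cases hx' : x ∈ D'
    · rw [override_apply_of_notMem f _ hx, override_apply_of_mem g _ hx',
        override_apply_of_mem g _ hx']
    · rw [override_apply_of_notMem f _ hx, override_apply_of_notMem g _ hx',
        override_apply_of_notMem g _ hx', override_apply_of_notMem f _ hx]

@[simp]
theorem updateConf_apply_self (y : Lat n) (a : Q) (c : Conf n Q q₀) :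
    (updateConf y a c).1 y = a :=
  Function.update_self ..

theorem updateConf_apply_of_ne {x y : Lat n} (h : x ≠ y) (a : Q) (c : Conf n Q q₀) :
    (updateConf y a c).1 x = c.1 x :=
  Function.update_of_ne h ..

@[simp]
theorem updateConf_updateConf (y : Lat n) (a b : Q) (c : Conf n Q q₀) :
    updateConf y a (updateConf y b c) = updateConf y a c :=
  Subtype.ext (Function.update_idem ..)

@[simp]
theorem updateConf_eq_self (y : Lat n) (c : Conf n Q q₀) : updateConf y (c.1 y) c = c :=
  Subtype.ext (Function.update_eq_self ..)

theorem override_singleton (y : Lat n) (a : Q) (c : Conf n Q q₀) :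
    override {y} (fun _ => a) c = updateConf y a c := by
  ext x
  by_cases hx : x = y
  · subst hx
    rw [override_apply_of_mem _ _ (Finset.mem_singleton_self x), updateConf_apply_self]
  · rw [override_apply_of_notMem _ _ (by simpa using hx), updateConf_apply_of_ne hx]

theorem restr_singleton_eq_iff {y : Lat n} {b : Q} {c : Conf n Q q₀} :
    restr {y} c = (fun _ => b) ↔ c.1 y = b := by
  refine ⟨fun h => congrFun h ⟨y, Finset.mem_singleton_self y⟩, fun h => funext fun x => ?_⟩
  show c.1 x.1 = b
  rw [Finset.mem_singleton.mp x.2, h]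

theorem override_insert {y : Lat n} {D : Finset (Lat n)} (f : {x // x ∈ insert y D} → Q)
    (c : Conf n Q q₀) :
    override (insert y D) f c = updateConf y (f ⟨y, Finset.mem_insert_self y D⟩)
      (override D (fun x => f ⟨x.1, Finset.mem_insert_of_mem x.2⟩) c) := by
  ext x
  by_cases hx : x = y
  · subst hx
    rw [override_apply_of_mem _ _ (Finset.mem_insert_self x D), updateConf_apply_self]
  · rw [updateConf_apply_of_ne hx]
    by_cases hxD : x ∈ D
    · rw [override_apply_of_mem _ _ (Finset.mem_insert_of_mem hxD), override_apply_of_mem _ _ hxD]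
    · rw [override_apply_of_notMem _ _ (by simp [hx, hxD]), override_apply_of_notMem _ _ hxD]

theorem restr_insert_eq_iff {y : Lat n} {D : Finset (Lat n)} {g : {x // x ∈ insert y D} → Q}
    {c : Conf n Q q₀} :
    restr (insert y D) c = g ↔ c.1 y = g ⟨y, Finset.mem_insert_self y D⟩ ∧
      restr D c = fun x => g ⟨x.1, Finset.mem_insert_of_mem x.2⟩ := by
  refine ⟨fun h => ⟨congrFun h ⟨y, _⟩, funext fun x => congrFun h ⟨x.1, _⟩⟩,
    fun ⟨hy, hD⟩ => funext ?_⟩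
  rintro ⟨x, hx⟩
  rcases Finset.mem_insert.mp hx with rfl | hxD
  · exact hy
  · exact congrFun hD ⟨x, hxD⟩

theorem override_updateConf {D : Finset (Lat n)} {y : Lat n} (hy : y ∉ D)
    (f : {x // x ∈ D} → Q) (a : Q) (c : Conf n Q q₀) :
    override D f (updateConf y a c) = updateConf y a (override D f c) := by
  rw [← override_singleton, ← override_singleton]
  exact override_comm (Finset.disjoint_singleton_right.mpr hy) _ _ _

def overridePerm (D : Finset (Lat n)) (τ : Equiv.Perm ({x // x ∈ D} → Q)) :
    Equiv.Perm (Conf n Q q₀) where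
  toFun c := override D (τ (restr D c)) c
  invFun c := override D (τ.symm (restr D c)) c
  left_inv c := by simp
  right_inv c := by simp

theorem overridePerm_symm_apply (D : Finset (Lat n)) (τ : Equiv.Perm ({x // x ∈ D} → Q))
    (c : Conf n Q q₀) : (overridePerm D τ).symm c = override D (τ.symm (restr D c)) c :=
  rfl

theorem overridePerm_apply (D : Finset (Lat n)) (τ : Equiv.Perm ({x // x ∈ D} → Q))
    (c : Conf n Q q₀) : overridePerm D τ c = override D (τ (restr D c)) c :=
  rfl

theorem eq_of_updateConf_invariant {α : Sort*} {D : Finset (Lat n)} {ψ : Conf n Q q₀ → α}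
    (hψ : ∀ y ∉ D, ∀ a c, ψ (updateConf y a c) = ψ c) {c c' : Conf n Q q₀}
    (h : restr D c = restr D c') : ψ c = ψ c' := by
  -- correct `c` towards `c'` one cell at a time, over a finite set outside which they agree
  suffices key : ∀ s : Finset (Lat n), ∀ c : Conf n Q q₀, restr D c = restr D c' →
      (∀ y ∉ s, c.1 y = c'.1 y) → ψ c = ψ c' by
    refine key (suppF c ∪ suppF c') c h fun y hy => ?_
    simp only [suppF, Finset.mem_union, Set.Finite.mem_toFinset, Set.mem_ofPred_eq, not_or,
      not_not] at hy
    rw [hy.1, hy.2]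
  intro s
  induction s using Finset.induction_on with
  | empty => exact fun c _ hc => congrArg ψ (Conf.ext fun y => hc y (Finset.notMem_empty y))
  | @insert y s _ ih =>
    intro c hD hc
    have hstep : ψ (updateConf y (c'.1 y) c) = ψ c := by
      by_cases hy : y ∈ D
      · rw [show c'.1 y = c.1 y from (congrFun hD ⟨y, hy⟩).symm, updateConf_eq_self]
      · exact hψ y hy _ c
    rw [← hstep]
    refine ih _ ?_ fun x hx => ?_
    · funext x
      show (updateConf y (c'.1 y) c).1 x.1 = c'.1 x.1
      by_cases hxy : x.1 = y
      · rw [hxy, updateConf_apply_self]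
      · rw [updateConf_apply_of_ne hxy]
        exact congrFun hD x
    · by_cases hxy : x = y
      · rw [hxy, updateConf_apply_self]
      · rw [updateConf_apply_of_ne hxy]
        exact hc x (by simp [hxy, hx])

end Configurations

section lpIndicator

variable {ι 𝕜 E : Type*} [NormedField 𝕜] [NormedAddCommGroup E] [NormedSpace 𝕜 E]
  {p : ℝ≥0∞} [Fact (1 ≤ p)]

def lpIndicator (s : Set ι) : lp (fun _ : ι => E) p →L[𝕜] lp (fun _ : ι => E) p :=
  LinearMap.mkContinuous
    { toFun := fun v => ⟨s.indicator v, (lp.memℓp v).mono' fun i => norm_indicator_le_norm_self v i⟩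
      map_add' := fun v w => lp.ext (Set.indicator_add s v w)
      map_smul' := fun r v => lp.ext (Set.indicator_const_smul s r v) }
    1 fun v => by
      rw [one_mul]
      exact lp.norm_mono (zero_lt_one.trans_le Fact.out).ne' fun i =>
        norm_indicator_le_norm_self v i

theorem lpIndicator_apply (s : Set ι) (v : lp (fun _ : ι => E) p) (i : ι) :
    lpIndicator (𝕜 := 𝕜) s v i = s.indicator v i :=
  rfl

end lpIndicator

section BasisVectors

variable {n : ℕ} {Q : Type*} {q₀ : Q}

theorem eVec_apply_self (c : Conf n Q q₀) : eVec c c = 1 := by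
  classical
  exact lp.single_apply_self 2 c 1

theorem eVec_apply_of_ne {c c' : Conf n Q q₀} (h : c' ≠ c) : eVec c c' = 0 := by
  classical
  exact lp.single_apply_ne 2 c 1 h

theorem eVec_eq_single [DecidableEq (Conf n Q q₀)] (c : Conf n Q q₀) :
    eVec c = lp.single 2 c 1 := by
  unfold eVec
  congr
  exact Subsingleton.elim _ _

theorem ext_eVec {T S : H n Q q₀ →L[ℂ] H n Q q₀} (h : ∀ c, T (eVec c) = S (eVec c)) : T = S := by
  classical
  refine lp.ext_continuousLinearMap ENNReal.ofNat_ne_top fun c => ContinuousLinearMap.ext_ring ?_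
  simpa only [ContinuousLinearMap.comp_apply, lp.singleContinuousLinearMap_apply, eVec_eq_single]
    using h c

theorem isomCLM_lpCongr_apply (e : Conf n Q q₀ ≃ Conf n Q q₀) (v : H n Q q₀) (c : Conf n Q q₀) :
    isomCLM (lpCongr e) v c = v (e.symm c) :=
  rfl

theorem isomCLM_lpCongr_eVec (e : Conf n Q q₀ ≃ Conf n Q q₀) (c : Conf n Q q₀) :
    isomCLM (lpCongr e) (eVec c) = eVec (e c) := by
  ext c'
  rw [isomCLM_lpCongr_apply]
  by_cases h : c' = e c
  · rw [h, e.symm_apply_apply, eVec_apply_self, eVec_apply_self]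
  · rw [eVec_apply_of_ne h, eVec_apply_of_ne fun h' => h (e.symm_apply_eq.mp h')]

theorem lpIndicator_eVec_of_mem {s : Set (Conf n Q q₀)} {c : Conf n Q q₀} (h : c ∈ s) :
    lpIndicator (𝕜 := ℂ) s (eVec c) = eVec c := by
  ext c'
  rw [lpIndicator_apply]
  by_cases h' : c' = c
  · rw [h', Set.indicator_of_mem h]
  · rw [eVec_apply_of_ne h', Set.indicator_apply_eq_zero]
    exact fun _ => eVec_apply_of_ne h'

theorem lpIndicator_eVec_of_notMem {s : Set (Conf n Q q₀)} {c : Conf n Q q₀} (h : c ∉ s) :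
    lpIndicator (𝕜 := ℂ) s (eVec c) = 0 := by
  ext c'
  rw [lpIndicator_apply]
  by_cases h' : c' = c
  · rw [h', Set.indicator_of_notMem h]
    rfl
  · rw [Set.indicator_apply_eq_zero.mpr fun _ => eVec_apply_of_ne h']
    rfl

end BasisVectors

section MatrixUnits

variable {n : ℕ} {Q : Type*} {q₀ : Q}

open Classical in
/-- The matrix unit `|f⟩⟨g|` on the cells of `D`, tensored with the identity elsewhere:
a permutation of configurations exchanging the windows `g` and `f`, after the projection onto
the configurations showing `g` on `D`. -/
def matrixUnit (q₀ : Q) (D : Finset (Lat n)) (f g : {x // x ∈ D} → Q) :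
    H n Q q₀ →L[ℂ] H n Q q₀ :=
  isomCLM (lpCongr (overridePerm D (Equiv.swap g f))) ∘L lpIndicator {c | restr D c = g}

theorem matrixUnit_eVec_of_eq {D : Finset (Lat n)} (f : {x // x ∈ D} → Q)
    {g : {x // x ∈ D} → Q} {c : Conf n Q q₀} (h : restr D c = g) :
    matrixUnit q₀ D f g (eVec c) = eVec (override D f c) := by
  classical
  rw [matrixUnit, ContinuousLinearMap.comp_apply, lpIndicator_eVec_of_mem h,
    isomCLM_lpCongr_eVec, overridePerm_apply, h, Equiv.swap_apply_left]

theorem matrixUnit_eVec_of_ne {D : Finset (Lat n)} (f : {x // x ∈ D} → Q)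
    {g : {x // x ∈ D} → Q} {c : Conf n Q q₀} (h : restr D c ≠ g) :
    matrixUnit q₀ D f g (eVec c) = 0 := by
  rw [matrixUnit, ContinuousLinearMap.comp_apply, lpIndicator_eVec_of_notMem h, map_zero]

theorem matrixUnit_apply_of_eq {D : Finset (Lat n)} {f : {x // x ∈ D} → Q}
    (g : {x // x ∈ D} → Q) (v : H n Q q₀) {c : Conf n Q q₀} (h : restr D c = f) :
    matrixUnit q₀ D f g v c = v (override D g c) := by
  classical
  rw [matrixUnit, ContinuousLinearMap.comp_apply, isomCLM_lpCongr_apply, lpIndicator_apply,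
    overridePerm_symm_apply, Equiv.symm_swap, h, Equiv.swap_apply_right]
  exact Set.indicator_of_mem (s := {c | restr D c = g}) (restr_override D g c) v

def cellMatrixUnit (q₀ : Q) (y : Lat n) (a b : Q) : H n Q q₀ →L[ℂ] H n Q q₀ :=
  matrixUnit q₀ {y} (fun _ => a) (fun _ => b)

theorem cellMatrixUnit_eVec_of_eq {y : Lat n} (a : Q) {b : Q} {c : Conf n Q q₀}
    (h : c.1 y = b) : cellMatrixUnit q₀ y a b (eVec c) = eVec (updateConf y a c) := by
  rw [cellMatrixUnit, matrixUnit_eVec_of_eq _ (restr_singleton_eq_iff.mpr h), override_singleton]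

theorem cellMatrixUnit_eVec_of_ne {y : Lat n} (a : Q) {b : Q} {c : Conf n Q q₀}
    (h : c.1 y ≠ b) : cellMatrixUnit q₀ y a b (eVec c) = 0 :=
  matrixUnit_eVec_of_ne _ fun h' => h (restr_singleton_eq_iff.mp h')

theorem cellMatrixUnit_apply_of_eq {y : Lat n} {a : Q} (b : Q) (v : H n Q q₀)
    {c : Conf n Q q₀} (h : c.1 y = a) : cellMatrixUnit q₀ y a b v c = v (updateConf y b c) := by
  rw [cellMatrixUnit, matrixUnit_apply_of_eq _ _ (restr_singleton_eq_iff.mpr h),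
    override_singleton]

theorem matrixUnit_empty (f g : {x // x ∈ (∅ : Finset (Lat n))} → Q) :
    matrixUnit q₀ ∅ f g = 1 := by
  refine ext_eVec fun c => ?_
  rw [matrixUnit_eVec_of_eq f (funext fun x => absurd x.2 (Finset.notMem_empty _))]
  exact congrArg eVec (Conf.ext fun x => override_apply_of_notMem f c (Finset.notMem_empty x))

theorem matrixUnit_insert {y : Lat n} {D : Finset (Lat n)} (hy : y ∉ D)
    (f g : {x // x ∈ insert y D} → Q) :
    matrixUnit q₀ (insert y D) f g =
      cellMatrixUnit q₀ y (f ⟨y, Finset.mem_insert_self y D⟩) (g ⟨y, Finset.mem_insert_self y D⟩) *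
        matrixUnit q₀ D (fun x => f ⟨x.1, Finset.mem_insert_of_mem x.2⟩)
          (fun x => g ⟨x.1, Finset.mem_insert_of_mem x.2⟩) := by
  refine ext_eVec fun c => ?_
  rw [mul_apply_eq_comp]
  by_cases hD : restr D c = fun x => g ⟨x.1, Finset.mem_insert_of_mem x.2⟩
  · have hcy : (override D (fun x => f ⟨x.1, Finset.mem_insert_of_mem x.2⟩) c).1 y = c.1 y :=
      override_apply_of_notMem _ c hy
    rw [matrixUnit_eVec_of_eq _ hD]
    by_cases hgy : c.1 y = g ⟨y, Finset.mem_insert_self y D⟩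
    · rw [matrixUnit_eVec_of_eq _ (restr_insert_eq_iff.mpr ⟨hgy, hD⟩),
        cellMatrixUnit_eVec_of_eq _ (hcy.trans hgy), override_insert]
    · rw [matrixUnit_eVec_of_ne _ fun h => hgy (restr_insert_eq_iff.mp h).1,
        cellMatrixUnit_eVec_of_ne _ (hcy ▸ hgy)]
  · rw [matrixUnit_eVec_of_ne _ hD, map_zero,
      matrixUnit_eVec_of_ne _ fun h => hD (restr_insert_eq_iff.mp h).2]

variable (q₀) in
def cellMatrixUnits (D : Finset (Lat n)) : Set (H n Q q₀ →L[ℂ] H n Q q₀) :=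
  {S | ∃ y ∈ D, ∃ a b : Q, S = cellMatrixUnit q₀ y a b}

theorem matrixUnit_mem_adjoin (D : Finset (Lat n)) (f g : {x // x ∈ D} → Q) :
    matrixUnit q₀ D f g ∈ Algebra.adjoin ℂ (cellMatrixUnits q₀ D) := by
  induction D using Finset.induction_on with
  | empty => exact matrixUnit_empty f g ▸ one_mem _
  | @insert y D hy ih =>
    rw [matrixUnit_insert hy]
    refine mul_mem (Algebra.subset_adjoin ⟨y, Finset.mem_insert_self y D, _, _, rfl⟩) ?_
    refine Algebra.adjoin_mono ?_ (ih _ _)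
    rintro _ ⟨z, hz, a, b, rfl⟩
    exact ⟨z, Finset.mem_insert_of_mem hz, a, b, rfl⟩

variable [Fintype Q]

theorem isLocalUpon_matrixUnit (D : Finset (Lat n)) (f g : {x // x ∈ D} → Q) :
    IsLocalUpon q₀ D (matrixUnit q₀ D f g) := by
  classical
  refine ⟨fun f' g' => if f' = f ∧ g' = g then 1 else 0, fun c => ?_⟩
  show _ = ∑ f', (if f' = f ∧ restr D c = g then (1 : ℂ) else 0) • eVec (override D f' c)
  by_cases h : restr D c = g
  · simp [h, matrixUnit_eVec_of_eq f h, ite_smul]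
  · simp [h, matrixUnit_eVec_of_ne f h]

theorem IsLocalUpon.eq_sum_matrixUnit {D : Finset (Lat n)} {T : H n Q q₀ →L[ℂ] H n Q q₀}
    (hT : IsLocalUpon q₀ D T) :
    ∃ a : ({x // x ∈ D} → Q) → ({x // x ∈ D} → Q) → ℂ,
      T = ∑ f, ∑ g, a f g • matrixUnit q₀ D f g := by
  obtain ⟨a, ha⟩ := hT
  refine ⟨a, ext_eVec fun c => ?_⟩
  rw [ha c, sum_apply]
  refine Finset.sum_congr rfl fun f _ => ?_
  rw [sum_apply, Finset.sum_eq_single (restr D c)]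
  · rw [smul_apply, matrixUnit_eVec_of_eq f rfl]
  · intro g _ hg
    rw [smul_apply, matrixUnit_eVec_of_ne f (Ne.symm hg), smul_zero]
  · exact fun h => absurd (Finset.mem_univ _) h

theorem isLocalUpon_cellMatrixUnit (y : Lat n) (a b : Q) :
    IsLocalUpon q₀ {y} (cellMatrixUnit q₀ y a b) :=
  isLocalUpon_matrixUnit _ _ _

theorem IsLocalUpon.mem_adjoin_cellMatrixUnits {D : Finset (Lat n)}
    {T : H n Q q₀ →L[ℂ] H n Q q₀} (hT : IsLocalUpon q₀ D T) :
    T ∈ Algebra.adjoin ℂ (cellMatrixUnits q₀ D) := by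
  obtain ⟨a, rfl⟩ := hT.eq_sum_matrixUnit
  exact Subalgebra.sum_mem _ fun f _ => Subalgebra.sum_mem _ fun g _ =>
    Subalgebra.smul_mem _ (matrixUnit_mem_adjoin D f g) _

end MatrixUnits

section Commutation

variable {n : ℕ} {Q : Type*} {q₀ : Q}

theorem apply_eVec_eq_zero_of_commute {D : Finset (Lat n)} {T : H n Q q₀ →L[ℂ] H n Q q₀}
    (hT : ∀ y ∉ D, ∀ a b, Commute T (cellMatrixUnit q₀ y a b)) {y : Lat n} (hy : y ∉ D)
    {c c' : Conf n Q q₀} (h : c'.1 y ≠ c.1 y) : T (eVec c) c' = 0 := by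
  have hcomm := DFunLike.congr_fun (hT y hy (c'.1 y) (c'.1 y)).eq (eVec c)
  rw [mul_apply_eq_comp, mul_apply_eq_comp, cellMatrixUnit_eVec_of_ne _ (Ne.symm h),
    map_zero] at hcomm
  rw [← updateConf_eq_self y c', ← cellMatrixUnit_apply_of_eq _ _ rfl, ← hcomm]
  rfl

theorem apply_eVec_updateConf_of_commute {D : Finset (Lat n)} {T : H n Q q₀ →L[ℂ] H n Q q₀}
    (hT : ∀ y ∉ D, ∀ a b, Commute T (cellMatrixUnit q₀ y a b)) {y : Lat n} (hy : y ∉ D)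
    (a : Q) {c c' : Conf n Q q₀} (h : c'.1 y = c.1 y) :
    T (eVec (updateConf y a c)) (updateConf y a c') = T (eVec c) c' := by
  have hcomm := DFunLike.congr_fun (hT y hy a (c.1 y)).eq (eVec c)
  rw [mul_apply_eq_comp, mul_apply_eq_comp, cellMatrixUnit_eVec_of_eq _ rfl] at hcomm
  rw [hcomm, cellMatrixUnit_apply_of_eq _ _ (updateConf_apply_self y a c'),
    updateConf_updateConf, ← h, updateConf_eq_self]

variable [Fintype Q]

open Classical in
theorem sum_smul_eVec_override_apply {D : Finset (Lat n)} (b : ({x // x ∈ D} → Q) → ℂ)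
    (c c' : Conf n Q q₀) :
    (∑ f, b f • eVec (override D f c)) c' =
      if override D (restr D c') c = c' then b (restr D c') else 0 := by
  simp only [lp.coeFn_sum, Finset.sum_apply, lp.coeFn_smul, Pi.smul_apply, smul_eq_mul]
  split_ifs with h
  · rw [Finset.sum_eq_single (restr D c')]
    · rw [h, eVec_apply_self, mul_one]
    · intro f _ hf
      rw [eVec_apply_of_ne fun hc => hf (by rw [hc, restr_override]), mul_zero]
    · exact fun h' => absurd (Finset.mem_univ _) h'
  · refine Finset.sum_eq_zero fun f _ => ?_
    rw [eVec_apply_of_ne fun hc => h (by rw [hc, restr_override]), mul_zero]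

theorem IsLocalUpon.commute_of_disjoint {D D' : Finset (Lat n)} (hD : Disjoint D D')
    {S T : H n Q q₀ →L[ℂ] H n Q q₀} (hS : IsLocalUpon q₀ D S) (hT : IsLocalUpon q₀ D' T) :
    Commute S T := by
  obtain ⟨a, ha⟩ := hS
  obtain ⟨b, hb⟩ := hT
  have ha' : ∀ c, S (eVec c) = ∑ f, a f (restr D c) • eVec (override D f c) := ha
  have hb' : ∀ c, T (eVec c) = ∑ g, b g (restr D' c) • eVec (override D' g c) := hb
  refine ext_eVec fun c => ?_
  simp only [mul_apply_eq_comp, ha', hb', map_sum, map_smul, Finset.smul_sum,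
    restr_override_of_disjoint hD, restr_override_of_disjoint hD.symm, override_comm hD]
  rw [Finset.sum_comm]
  simp only [smul_comm (a _ _)]

theorem isLocalUpon_of_commute_cellMatrixUnit {D : Finset (Lat n)}
    {T : H n Q q₀ →L[ℂ] H n Q q₀} (hT : ∀ y ∉ D, ∀ a b, Commute T (cellMatrixUnit q₀ y a b)) :
    IsLocalUpon q₀ D T := by
  refine ⟨fun f g => T (eVec (override D g (c0 n Q q₀))) (override D f (c0 n Q q₀)),
    fun c => ?_⟩
  ext c'
  rw [sum_smul_eVec_override_apply]
  split_ifs with h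
  · let ψ : Conf n Q q₀ → ℂ := fun d => T (eVec d) (override D (restr D c') d)
    have hψ : ∀ y ∉ D, ∀ a d, ψ (updateConf y a d) = ψ d := fun y hy a d => by
      simp only [ψ, override_updateConf hy]
      exact apply_eVec_updateConf_of_commute hT hy a (override_apply_of_notMem _ _ hy)
    calc T (eVec c) c' = ψ c := by rw [← h]
      _ = ψ (override D (restr D c) (c0 n Q q₀)) :=
        eq_of_updateConf_invariant hψ (restr_override D (restr D c) (c0 n Q q₀)).symm
      _ = _ := by simp only [ψ, override_override]
  · obtain ⟨y, hy, hne⟩ : ∃ y ∉ D, c'.1 y ≠ c.1 y := by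
      by_contra! hagree
      refine h (Conf.ext fun x => ?_)
      by_cases hx : x ∈ D
      · rw [override_apply_of_mem _ _ hx]
      · rw [override_apply_of_notMem _ _ hx, hagree x hx]
    exact apply_eVec_eq_zero_of_commute hT hy hne

end Commutation

theorem mem_nbhd_iff_mem_rnbhd {n : ℕ} {𝒩 : Finset (Lat n)} {x y : Lat n} :
    x ∈ nbhd 𝒩 y ↔ y ∈ rnbhd 𝒩 x := by
  simp only [nbhd, rnbhd, Finset.mem_image]
  exact exists_congr fun k => and_congr_right fun _ => eq_comm.trans sub_eq_iff_eq_add.symm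

section UnitaryConjugation

variable {R A : Type*} [CommSemiring R] [Semiring A] [StarMul A] [Algebra R A]
  {u : A}

theorem commute_conj_of_commute (hu : u ∈ unitary A) {a b : A}
    (h : Commute a (star u * b * u)) : Commute (u * a * star u) b := by
  have hconj := h.map (Unitary.conjStarAlgAut ℕ A ⟨u, hu⟩)
  rwa [Unitary.conjStarAlgAut_apply, Unitary.conjStarAlgAut_apply,
    show u * (star u * b * u) * star u = u * star u * b * (u * star u) by simp only [mul_assoc],
    Unitary.mul_star_self_of_mem hu, one_mul, mul_one] at hconj

theorem star_mul_mul_mem_adjoin (hu : u ∈ unitary A) {s t : Set A}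
    (hst : ∀ a ∈ s, star u * a * u ∈ t) {a : A} (ha : a ∈ Algebra.adjoin R s) :
    star u * a * u ∈ Algebra.adjoin R t := by
  have hconj := Algebra.adjoin_le (S := (Algebra.adjoin R t).comap
    (Unitary.conjStarAlgAut R A (star ⟨u, hu⟩)).toAlgEquiv.toAlgHom)
    (fun b hb => by simpa using Algebra.subset_adjoin (R := R) (hst b hb)) ha
  simpa using hconj

end UnitaryConjugation

theorem adjoint_comp_comp_eq_star_mul_mul {E : Type*} [NormedAddCommGroup E]
    [InnerProductSpace ℂ E] [CompleteSpace E] (M B : E →L[ℂ] E) :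
    ContinuousLinearMap.adjoint M ∘L B ∘L M = star M * B * M := by
  rw [ContinuousLinearMap.star_eq_adjoint, mul_assoc]
  rfl

theorem one_cell_algebra_inside_generated_image_algebras_general
    (n : ℕ) (Q : Type) [Fintype Q] (q₀ : Q) (𝒩 : Finset (Lat n))
    (M : H n Q q₀ →L[ℂ] H n Q q₀) (hM : M ∈ unitary (H n Q q₀ →L[ℂ] H n Q q₀))
    (hC : Causal q₀ 𝒩 M) :
    ∀ (x : Lat n) (A : H n Q q₀ →L[ℂ] H n Q q₀), IsLocalUpon q₀ {x} A →
      A ∈ Algebra.adjoin ℂ (⋃ k : {k // k ∈ 𝒩},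
        {T : H n Q q₀ →L[ℂ] H n Q q₀ | ∃ B : H n Q q₀ →L[ℂ] H n Q q₀,
          IsLocalUpon q₀ {x - k.1} B ∧ T = ContinuousLinearMap.adjoint M ∘L B ∘L M}) := by
  intro x A hA
  have hA' : IsLocalUpon q₀ (rnbhd 𝒩 x) (M * A * star M) := by
    refine isLocalUpon_of_commute_cellMatrixUnit fun y hy a b => commute_conj_of_commute hM ?_
    rw [← adjoint_comp_comp_eq_star_mul_mul]
    refine hA.commute_of_disjoint ?_ (hC y _ (isLocalUpon_cellMatrixUnit y a b))
    rwa [Finset.disjoint_singleton_left, mem_nbhd_iff_mem_rnbhd]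
  have hA_eq : A = star M * (M * A * star M) * M := by
    simp only [mul_assoc, Unitary.star_mul_self_of_mem hM, mul_one]
    rw [← mul_assoc, Unitary.star_mul_self_of_mem hM, one_mul]
  rw [hA_eq]
  refine star_mul_mul_mem_adjoin hM ?_ hA'.mem_adjoin_cellMatrixUnits
  rintro _ ⟨y, hy, a, b, rfl⟩
  obtain ⟨k, hk, rfl⟩ := Finset.mem_image.mp hy
  exact Set.mem_iUnion.2 ⟨⟨k, hk⟩, _, isLocalUpon_cellMatrixUnit _ a b,
    (adjoint_comp_comp_eq_star_mul_mul _ _).symm⟩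

/-- For a causal unitary `M`, every operator local upon a cell `x` belongs to
the subalgebra generated by the images under conjugation by `M` of the operators local upon
the cells `x - k`, `k ∈ 𝒩`. -/
theorem one_cell_algebra_inside_generated_image_algebras
    (n : ℕ) (hn : 1 ≤ n) (Q : Type) [Fintype Q] (q₀ : Q) (𝒩 : Finset (Lat n))
    (M : H n Q q₀ →L[ℂ] H n Q q₀) (hM : M ∈ unitary (H n Q q₀ →L[ℂ] H n Q q₀))
    (hC : Causal q₀ 𝒩 M) :
    ∀ (x : Lat n) (A : H n Q q₀ →L[ℂ] H n Q q₀), IsLocalUpon q₀ {x} A →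
      A ∈ Algebra.adjoin ℂ (⋃ k : {k // k ∈ 𝒩},
        {T : H n Q q₀ →L[ℂ] H n Q q₀ | ∃ B : H n Q q₀ →L[ℂ] H n Q q₀,
          IsLocalUpon q₀ {x - k.1} B ∧ T = ContinuousLinearMap.adjoint M ∘L B ∘L M}) :=
  one_cell_algebra_inside_generated_image_algebras_general n Q q₀ 𝒩 M hM hC

end QCA
end
end
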